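/- arXiv:2301.12965 — 4 statements merged into one kernel-verified Lean document; each statement's English description precedes it below -/
import Mathlib

section
/- Let ℓ(R, Φ) = ‖X − R T(Φ)‖_F² where T(Φ) ∈ ℝ^{((2+3d+d²)/2)×m} has columns ξ(τ_i) = (1, τ_iᵀ, ψ(τ_i)ᵀ)ᵀ for Φ = (τ₁,…,τ_m) ∈ ℝ^{d×m}, with ψ(τ) the vector of quadratic monomials of τ. Suppose Φ' = ZΦ + u 1_mᵀ for an invertible Z ∈ ℝ^{d×d} and u ∈ ℝ^d. Then for every R there exists R' with ℓ(R', Φ') = ℓ(R, Φ); in particular min_R ℓ(R, Φ') = min_R ℓ(R, Φ). -/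
/-!
A quadratic polynomial in `Zτ + u` is a quadratic polynomial in `τ`, so every coordinate of
`ξ(Zτ + u)` is a fixed linear combination of the coordinates of `ξ(τ)`: `ξ(Zτ + u) = A ξ(τ)`
and hence `T(ZΦ + u1ᵀ) = A T(Φ)`. Applying this also to the inverse affine map `Z⁻¹(· - u)`
shows that `T(Φ)` and `T(Φ')` have the same row space, so the families `R T(Φ)` and `R' T(Φ')`
range over the same matrices and the losses coincide.
-/

open Matrix

/-- Index set of the `(d²+d)/2` monomials `τ_i τ_j`, `i ≤ j`. -/
abbrev QIdx (d : ℕ) := {p : Fin d × Fin d // p.1 ≤ p.2}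

/-- The lifted feature vector `ξ(τ) = (1, τᵀ, ψ(τ)ᵀ)ᵀ`. -/
def xiFeat {d : ℕ} (τ : Fin d → ℝ) : Unit ⊕ Fin d ⊕ QIdx d → ℝ
  | Sum.inl _ => 1
  | Sum.inr (Sum.inl j) => τ j
  | Sum.inr (Sum.inr p) => τ p.1.1 * τ p.1.2

/-- The feature matrix `T(Φ)` with columns `ξ(τ_i)`. -/
def TMat {d m : ℕ} (Φ : Matrix (Fin d) (Fin m) ℝ) :
    Matrix (Unit ⊕ Fin d ⊕ QIdx d) (Fin m) ℝ :=
  Matrix.of fun r i => xiFeat (fun j => Φ j i) r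

section QuadraticFunctions

variable {d : ℕ}

def affineFunctions (d : ℕ) : Submodule ℝ ((Fin d → ℝ) → ℝ) :=
  Submodule.span ℝ (insert 1 (Set.range fun k τ => τ k))

def quadraticFunctions (d : ℕ) : Submodule ℝ ((Fin d → ℝ) → ℝ) :=
  Submodule.span ℝ (Set.range fun r τ => xiFeat τ r)

lemma xiFeat_mem_quadraticFunctions (r : Unit ⊕ Fin d ⊕ QIdx d) :
    (fun τ => xiFeat τ r) ∈ quadraticFunctions d :=
  Submodule.subset_span ⟨r, rfl⟩

lemma coord_mul_coord_mem_quadraticFunctions (k l : Fin d) :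
    (fun τ : Fin d → ℝ => τ k * τ l) ∈ quadraticFunctions d := by
  rcases le_total k l with h | h
  · exact xiFeat_mem_quadraticFunctions (.inr (.inr ⟨(k, l), h⟩))
  · convert xiFeat_mem_quadraticFunctions (d := d) (.inr (.inr ⟨(l, k), h⟩)) using 2 with τ
    exact mul_comm _ _

lemma affineFunctions_le_quadraticFunctions : affineFunctions d ≤ quadraticFunctions d := by
  rw [affineFunctions, Submodule.span_le]
  rintro _ (rfl | ⟨k, rfl⟩)
  · exact xiFeat_mem_quadraticFunctions (.inl ())
  · exact xiFeat_mem_quadraticFunctions (.inr (.inl k))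

lemma affineFunctions_mul_affineFunctions_le :
    affineFunctions d * affineFunctions d ≤ quadraticFunctions d := by
  rw [affineFunctions, Submodule.span_mul_span, Submodule.span_le]
  rintro _ ⟨f, hf, g, hg, rfl⟩
  rcases hf with rfl | ⟨k, rfl⟩
  · dsimp only
    rw [one_mul]
    exact affineFunctions_le_quadraticFunctions (Submodule.subset_span hg)
  rcases hg with rfl | ⟨l, rfl⟩
  · dsimp only
    rw [mul_one]
    exact affineFunctions_le_quadraticFunctions
      (Submodule.subset_span (Set.mem_insert_of_mem _ ⟨k, rfl⟩))
  · exact coord_mul_coord_mem_quadraticFunctions k l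

lemma affine_coord_mem_affineFunctions (Z : Matrix (Fin d) (Fin d) ℝ) (u : Fin d → ℝ)
    (j : Fin d) :
    (fun τ => (Z *ᵥ τ + u) j) ∈ affineFunctions d := by
  have hsum : (fun τ => (Z *ᵥ τ + u) j)
      = ∑ k, Z j k • (fun τ : Fin d → ℝ => τ k) + u j • 1 := by
    ext τ; simp [mulVec, dotProduct]
  rw [hsum]
  refine add_mem (sum_mem fun k _ => Submodule.smul_mem _ _ ?_) (Submodule.smul_mem _ _ ?_)
  · exact Submodule.subset_span (Set.mem_insert_of_mem _ ⟨k, rfl⟩)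
  · exact Submodule.subset_span (Set.mem_insert _ _)

lemma xiFeat_affine_mem_quadraticFunctions (Z : Matrix (Fin d) (Fin d) ℝ) (u : Fin d → ℝ)
    (r : Unit ⊕ Fin d ⊕ QIdx d) :
    (fun τ => xiFeat (Z *ᵥ τ + u) r) ∈ quadraticFunctions d := by
  rcases r with _ | j | p
  · exact xiFeat_mem_quadraticFunctions (.inl ())
  · exact affineFunctions_le_quadraticFunctions (affine_coord_mem_affineFunctions Z u j)
  · exact affineFunctions_mul_affineFunctions_le <| Submodule.mul_mem_mul
      (affine_coord_mem_affineFunctions Z u p.1.1) (affine_coord_mem_affineFunctions Z u p.1.2)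

theorem exists_xiFeat_affine_eq_mulVec (Z : Matrix (Fin d) (Fin d) ℝ) (u : Fin d → ℝ) :
    ∃ A : Matrix (Unit ⊕ Fin d ⊕ QIdx d) (Unit ⊕ Fin d ⊕ QIdx d) ℝ,
      ∀ τ, xiFeat (Z *ᵥ τ + u) = A *ᵥ xiFeat τ := by
  choose A hA using fun r => (Submodule.mem_span_range_iff_exists_fun ℝ).1
    (xiFeat_affine_mem_quadraticFunctions Z u r)
  refine ⟨of A, fun τ => funext fun r => ?_⟩
  rw [← congrFun (hA r) τ]
  simp only [Finset.sum_apply, Pi.smul_apply, smul_eq_mul]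
  rfl

end QuadraticFunctions

theorem exists_TMat_affine_eq_mul {d m : ℕ} (Z : Matrix (Fin d) (Fin d) ℝ) (u : Fin d → ℝ)
    (Φ : Matrix (Fin d) (Fin m) ℝ) :
    ∃ A : Matrix (Unit ⊕ Fin d ⊕ QIdx d) (Unit ⊕ Fin d ⊕ QIdx d) ℝ,
      TMat (Z * Φ + Matrix.of fun j _ => u j) = A * TMat Φ := by
  obtain ⟨A, hA⟩ := exists_xiFeat_affine_eq_mulVec Z u
  refine ⟨A, ext fun r i => ?_⟩
  have hcol : (fun j => (Z * Φ + Matrix.of fun j (_ : Fin m) => u j) j i)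
      = Z *ᵥ (fun j => Φ j i) + u := by
    ext j
    simp [mul_apply, mulVec, dotProduct]
  change xiFeat _ r = _
  rw [hcol, hA]
  rfl

theorem eq_affine_of_eq_affine {d m : ℕ} {Z : Matrix (Fin d) (Fin d) ℝ} (hZ : IsUnit Z.det)
    {u : Fin d → ℝ} {Φ Φ' : Matrix (Fin d) (Fin m) ℝ}
    (hΦ' : Φ' = Z * Φ + Matrix.of fun j _ => u j) :
    Φ = Z⁻¹ * Φ' + Matrix.of fun j _ => (-(Z⁻¹ *ᵥ u)) j := by
  rw [hΦ', Matrix.mul_add, ← Matrix.mul_assoc, nonsing_inv_mul Z hZ, Matrix.one_mul]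
  ext j i
  simp [mul_apply, mulVec, dotProduct]

/-- Proposition 1: if `Φ' = ZΦ + u1ᵀ` with `Z` invertible, then for every `R` there is `R'`
with `ℓ(R',Φ') = ℓ(R,Φ)`; in particular the minimal losses agree. -/
theorem stmt9 {D d m : ℕ} (X : Matrix (Fin D) (Fin m) ℝ)
    (Φ : Matrix (Fin d) (Fin m) ℝ) (Z : Matrix (Fin d) (Fin d) ℝ) (u : Fin d → ℝ)
    (hZ : IsUnit Z.det)
    (Φ' : Matrix (Fin d) (Fin m) ℝ) (hΦ' : Φ' = Z * Φ + Matrix.of fun j _ => u j) :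
    (∀ R : Matrix (Fin D) (Unit ⊕ Fin d ⊕ QIdx d) ℝ,
        ∃ R' : Matrix (Fin D) (Unit ⊕ Fin d ⊕ QIdx d) ℝ,
          ∑ i, ∑ j, ((X - R' * TMat Φ') i j) ^ 2 = ∑ i, ∑ j, ((X - R * TMat Φ) i j) ^ 2) ∧
      sInf {l : ℝ | ∃ R : Matrix (Fin D) (Unit ⊕ Fin d ⊕ QIdx d) ℝ,
              l = ∑ i, ∑ j, ((X - R * TMat Φ') i j) ^ 2}
        = sInf {l : ℝ | ∃ R : Matrix (Fin D) (Unit ⊕ Fin d ⊕ QIdx d) ℝ,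
              l = ∑ i, ∑ j, ((X - R * TMat Φ) i j) ^ 2} := by
  obtain ⟨A, hA⟩ := exists_TMat_affine_eq_mul Z u Φ
  obtain ⟨B, hB⟩ := exists_TMat_affine_eq_mul Z⁻¹ (-(Z⁻¹ *ᵥ u)) Φ'
  rw [← hΦ'] at hA
  rw [← eq_affine_of_eq_affine hZ hΦ'] at hB
  refine ⟨fun R => ⟨R * B, by rw [Matrix.mul_assoc, ← hB]⟩,
    congrArg sInf (Set.ext fun l => ⟨?_, ?_⟩)⟩
  · rintro ⟨R, rfl⟩
    exact ⟨R * A, by rw [Matrix.mul_assoc, ← hA]⟩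
  · rintro ⟨R, rfl⟩
    exact ⟨R * B, by rw [Matrix.mul_assoc, ← hB]⟩
end

section
/- Let Φ ∈ ℝ^{d×m} satisfy ΦΦᵀ = I_d and Φ1_m = 0, and let T(Φ) = (1_m, Φᵀ, Ψ(Φ)ᵀ)ᵀ where Ψ(Φ) has columns ψ(τ_i), the quadratic monomial vectors of the columns τ_i of Φ. Let J = (0, I_{(d²+d)/2})ᵀ. Then for any λ > 0, the matrix T(Φ)T(Φ)ᵀ + λ J Jᵀ is positive definite. -/
open Matrix

/-- The selector `J = (0, I)ᵀ` extracting the quadratic block. -/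
def Jmat (d : ℕ) : Matrix (Unit ⊕ Fin d ⊕ QIdx d) (QIdx d) ℝ :=
  Matrix.of fun r q => match r with
    | Sum.inr (Sum.inr q') => if q' = q then (1 : ℝ) else 0
    | _ => 0

/-!
`T Tᵀ + λ J Jᵀ = C Cᵀ` with `C = [T | √λ J]`, so it suffices that no nonzero `v` is killed by
both `Tᵀ` and `Jᵀ`. Such a `v = (a, b, 0)` satisfies `a 1 + Φᵀ b = 0`; applying `Φ` and using
`Φ Φᵀ = I`, `Φ 1 = 0` gives `b = 0`, and then `a = 0`.
-/

namespace Matrix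

variable {n k l : Type*} [Fintype n] [Fintype k] [Fintype l]

theorem posDef_mul_transpose_add_smul_mul_transpose {A : Matrix n k ℝ} {B : Matrix n l ℝ}
    {c : ℝ} (hc : 0 < c) (h : ∀ x : n → ℝ, x ᵥ* A = 0 → x ᵥ* B = 0 → x = 0) :
    (A * Aᵀ + c • (B * Bᵀ)).PosDef := by
  set C := fromCols A (√c • B)
  have hC : A * Aᵀ + c • (B * Bᵀ) = C * Cᴴ := by
    rw [conjTranspose_eq_transpose_of_trivial, transpose_fromCols, fromCols_mul_fromRows,
      transpose_smul, smul_mul, Matrix.mul_smul, smul_smul, Real.mul_self_sqrt hc.le]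
  rw [hC]
  refine PosDef.mul_conjTranspose_self C fun x y hxy => sub_eq_zero.mp ?_
  have hC0 : (x - y) ᵥ* C = 0 := by rw [sub_vecMul, sub_eq_zero]; exact hxy
  rw [vecMul_fromCols, ← Sum.elim_zero_zero, Sum.elim_eq_iff, vecMul_smul] at hC0
  exact h _ hC0.1 ((smul_eq_zero.mp hC0.2).resolve_left (Real.sqrt_pos.mpr hc).ne')

theorem eq_zero_of_smul_add_vecMul_eq_zero {R ι μ : Type*} [CommRing R] [Fintype ι]
    [Fintype μ] [DecidableEq ι] {Φ : Matrix ι μ R} (hΦ : Φ * Φᵀ = 1)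
    (hc : Φ *ᵥ (fun _ => 1) = 0) {a : R} {b : ι → R} (h : a • (fun _ => 1) + b ᵥ* Φ = 0) :
    b = 0 :=
  calc b = (Φ * Φᵀ) *ᵥ b := by rw [hΦ, one_mulVec]
    _ = Φ *ᵥ (b ᵥ* Φ) := by rw [← mulVec_mulVec, mulVec_transpose]
    _ = Φ *ᵥ -(a • fun _ => 1) := by rw [eq_neg_of_add_eq_zero_right h]
    _ = 0 := by rw [mulVec_neg, mulVec_smul, hc, smul_zero, neg_zero]

end Matrix

theorem vecMul_Jmat {d : ℕ} (x : Unit ⊕ Fin d ⊕ QIdx d → ℝ) :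
    x ᵥ* Jmat d = fun q => x (Sum.inr (Sum.inr q)) := by
  funext q
  simp [Jmat, vecMul, dotProduct, Fintype.sum_sum_type]

theorem vecMul_TMat_of_quadratic_eq_zero {d m : ℕ} (Φ : Matrix (Fin d) (Fin m) ℝ)
    {x : Unit ⊕ Fin d ⊕ QIdx d → ℝ} (hx : ∀ q, x (Sum.inr (Sum.inr q)) = 0) :
    x ᵥ* TMat Φ = x (Sum.inl ()) • (fun _ => 1) + (fun j => x (Sum.inr (Sum.inl j))) ᵥ* Φ := by
  funext i
  simp [TMat, xiFeat, vecMul, dotProduct, Fintype.sum_sum_type, hx]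

/-- Lemma 1: if `ΦΦᵀ = I`, `Φ1 = 0`, and `λ > 0`, then `T(Φ)T(Φ)ᵀ + λJJᵀ` is
positive definite. -/
theorem stmt12 {d m : ℕ} (hm : 0 < m) (Φ : Matrix (Fin d) (Fin m) ℝ)
    (hΦ : Φ * Φᵀ = 1) (hc : Φ.mulVec (fun _ => 1) = 0)
    (lam : ℝ) (hlam : 0 < lam) :
    (TMat Φ * (TMat Φ)ᵀ + lam • (Jmat d * (Jmat d)ᵀ)).PosDef := by
  refine posDef_mul_transpose_add_smul_mul_transpose hlam fun x hT hJ => ?_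
  have hquad : ∀ q, x (Sum.inr (Sum.inr q)) = 0 := fun q => by
    simpa [vecMul_Jmat] using congrFun hJ q
  have hab := vecMul_TMat_of_quadratic_eq_zero Φ hquad ▸ hT
  have hlin := eq_zero_of_smul_add_vecMul_eq_zero hΦ hc hab
  have hconst : x (Sum.inl ()) = 0 := by simpa [hlin] using congrFun hab ⟨0, hm⟩
  funext r
  rcases r with _ | j | q
  exacts [hconst, congrFun hlin j, hquad q]
end

section
/- Fix X ∈ ℝ^{D×m}, T ∈ ℝ^{r×m}, and J ∈ ℝ^{r×s} such that M(λ) = TTᵀ + λJJᵀ is positive definite for all λ > 0. Define R̃(λ) = X Tᵀ M(λ)⁻¹ and s(λ) = ‖R̃(λ)J‖_F². Then s is differentiable on (0, ∞) with s'(λ) ≤ 0 and s''(λ) ≥ 0; i.e., s is nonincreasing and convex. -/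
/-!
Write `M(λ) = A + λ J Jᵀ`, `P = C M⁻¹ J` and `Q = Jᵀ M⁻¹ J`, so that `s = ‖P‖_F²` with
`A = T Tᵀ`, `C = X Tᵀ`. From `(M⁻¹)' = -M⁻¹ J Jᵀ M⁻¹` one gets `P' = -P Q` and `Q' = -Q²`, hence
`s' = -2 ⟪P, P Q⟫` and `s'' = 2 ‖P Q‖² + 4 ⟪P, P Q²⟫`. As `Q` is positive semidefinite,
`⟪P, P Q⟫ = tr (P Q Pᵀ) ≥ 0`, and likewise for `Q²`.
-/

open Matrix Finset

theorem hasDerivAt_matrix_mul_apply {a b c : Type*} [Fintype b] {U : ℝ → Matrix a b ℝ}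
    {V : ℝ → Matrix b c ℝ} {U' : Matrix a b ℝ} {V' : Matrix b c ℝ} {μ : ℝ}
    (hU : ∀ i j, HasDerivAt (fun t => U t i j) (U' i j) μ)
    (hV : ∀ i j, HasDerivAt (fun t => V t i j) (V' i j) μ) (i : a) (j : c) :
    HasDerivAt (fun t => (U t * V t) i j) ((U' * V μ + U μ * V') i j) μ := by
  simp only [mul_apply, Matrix.add_apply, ← sum_add_distrib]
  exact HasDerivAt.fun_sum fun l _ => (hU i l).fun_mul (hV l j)

section

attribute [local instance] Matrix.linftyOpNormedRing Matrix.linftyOpNormedAlgebra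

theorem hasDerivAt_inv_add_smul_apply {n : Type*} [Fintype n] [DecidableEq n]
    (A B : Matrix n n ℝ) {μ : ℝ} (h : IsUnit (A + μ • B)) (i j : n) :
    HasDerivAt (fun t : ℝ => (A + t • B)⁻¹ i j)
      (-((A + μ • B)⁻¹ * B * (A + μ • B)⁻¹) i j) μ := by
  obtain ⟨u, hu⟩ := h
  have hline := ((hasDerivAt_id μ).smul_const B).const_add A
  simp only [id_eq, one_smul] at hline
  have hinv := (hu ▸ hasFDerivAt_ringInverse (𝕜 := ℝ) u).comp_hasDerivAt μ hline
  have hu' : (↑u⁻¹ : Matrix n n ℝ) = (A + μ • B)⁻¹ := by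
    rw [nonsing_inv_eq_ringInverse, ← hu, Ring.inverse_unit]
  simp only [_root_.neg_apply, ContinuousLinearMap.mulLeftRight_apply, hu',
    Function.comp_def, ← nonsing_inv_eq_ringInverse] at hinv
  exact (LinearMap.toContinuousLinearMap (entryLinearMap ℝ ℝ i j)).hasFDerivAt.comp_hasDerivAt μ
    hinv

end

theorem sum_mul_mul_apply_nonneg {d k : Type*} [Fintype d] [Fintype k] (P : Matrix d k ℝ)
    {Q : Matrix k k ℝ} (hQ : Q.PosSemidef) : 0 ≤ ∑ i, ∑ q, P i q * (P * Q) i q := by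
  simpa only [trace, diag_apply, mul_apply, conjTranspose_apply, star_trivial, mul_comm]
    using (hQ.mul_mul_conjTranspose_same P).trace_nonneg

section RidgePath

variable {d n k : Type*} [Fintype n] [DecidableEq n] [Fintype k]
  (A : Matrix n n ℝ) (C : Matrix d n ℝ) (J : Matrix n k ℝ)

/-- `P = C M⁻¹ J` for `M = A + t J Jᵀ`; with `C = Jᵀ` this is `Q = Jᵀ M⁻¹ J`. -/
noncomputable def ridgeCoef (t : ℝ) : Matrix d k ℝ := C * (A + t • (J * Jᵀ))⁻¹ * J

variable {A C J} {t : ℝ}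

theorem hasDerivAt_ridgeCoef_apply (ht : IsUnit (A + t • (J * Jᵀ))) (i : d) (q : k) :
    HasDerivAt (fun u => ridgeCoef A C J u i q)
      (-(ridgeCoef A C J t * ridgeCoef A Jᵀ J t) i q) t := by
  have hC := hasDerivAt_matrix_mul_apply (U' := 0) (V' := -_)
    (fun i j => hasDerivAt_const t (C i j)) (hasDerivAt_inv_add_smul_apply A _ ht)
  refine (hasDerivAt_matrix_mul_apply (V' := 0) hC (fun i j => hasDerivAt_const t (J i j))
    i q).congr_deriv ?_
  simp only [ridgeCoef, Matrix.zero_mul, zero_add, Matrix.mul_zero, add_zero, Matrix.mul_neg,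
    Matrix.neg_mul, Matrix.neg_apply, Matrix.mul_assoc]

theorem ridgeCoef_transpose_posSemidef (ht : (A + t • (J * Jᵀ)).PosDef) :
    (ridgeCoef A Jᵀ J t).PosSemidef := by
  simpa only [ridgeCoef, conjTranspose_eq_transpose_of_trivial] using
    ht.inv.posSemidef.conjTranspose_mul_mul_same J

variable [Fintype d] (A C J)

noncomputable def ridgeSq (t : ℝ) : ℝ := ∑ i, ∑ q, (ridgeCoef A C J t i q) ^ 2

noncomputable def ridgeSqDeriv (t : ℝ) : ℝ :=
  -2 * ∑ i, ∑ q, ridgeCoef A C J t i q * (ridgeCoef A C J t * ridgeCoef A Jᵀ J t) i q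

noncomputable def ridgeSqDeriv2 (t : ℝ) : ℝ :=
  2 * ∑ i, ∑ q, ((ridgeCoef A C J t * ridgeCoef A Jᵀ J t) i q) ^ 2 +
    4 * ∑ i, ∑ q, ridgeCoef A C J t i q *
      (ridgeCoef A C J t * (ridgeCoef A Jᵀ J t * ridgeCoef A Jᵀ J t)) i q

variable {A C J}

theorem hasDerivAt_ridgeSq (ht : IsUnit (A + t • (J * Jᵀ))) :
    HasDerivAt (ridgeSq A C J) (ridgeSqDeriv A C J t) t := by
  refine (HasDerivAt.fun_sum fun i _ => HasDerivAt.fun_sum fun q _ =>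
    (hasDerivAt_ridgeCoef_apply (C := C) ht i q).fun_pow 2).congr_deriv ?_
  simp only [ridgeSqDeriv, mul_sum]
  refine sum_congr rfl fun i _ => sum_congr rfl fun q _ => ?_
  ring

theorem hasDerivAt_ridgeSqDeriv (ht : IsUnit (A + t • (J * Jᵀ))) :
    HasDerivAt (ridgeSqDeriv A C J) (ridgeSqDeriv2 A C J t) t := by
  have hP := hasDerivAt_ridgeCoef_apply (C := C) ht
  have hPQ := hasDerivAt_matrix_mul_apply (U' := -_) (V' := -_) hP
    (hasDerivAt_ridgeCoef_apply (C := Jᵀ) ht)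
  refine ((HasDerivAt.fun_sum fun i _ => HasDerivAt.fun_sum fun q _ =>
    (hP i q).fun_mul (hPQ i q)).const_mul (-2 : ℝ)).congr_deriv ?_
  simp only [ridgeSqDeriv2, Matrix.add_apply, Matrix.neg_apply, Matrix.neg_mul, Matrix.mul_neg,
    Matrix.mul_assoc, mul_sum, ← sum_add_distrib]
  refine sum_congr rfl fun i _ => sum_congr rfl fun q _ => ?_
  ring

theorem ridgeSqDeriv_nonpos (ht : (A + t • (J * Jᵀ)).PosDef) : ridgeSqDeriv A C J t ≤ 0 := by
  have := sum_mul_mul_apply_nonneg (ridgeCoef A C J t) (ridgeCoef_transpose_posSemidef ht)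
  rw [ridgeSqDeriv]
  linarith

theorem ridgeSqDeriv2_nonneg (ht : (A + t • (J * Jᵀ)).PosDef) : 0 ≤ ridgeSqDeriv2 A C J t := by
  have hQ := ridgeCoef_transpose_posSemidef ht
  have hQQ := sum_mul_mul_apply_nonneg (ridgeCoef A C J t)
    (hQ.isHermitian.eq ▸ posSemidef_conjTranspose_mul_self (ridgeCoef A Jᵀ J t))
  have hsq : 0 ≤ ∑ i, ∑ q, ((ridgeCoef A C J t * ridgeCoef A Jᵀ J t) i q) ^ 2 := by positivity
  rw [ridgeSqDeriv2]
  linarith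

end RidgePath

/-- Proposition 2: with `M(λ) = TTᵀ + λJJᵀ` positive definite for `λ > 0`,
`R̃(λ) = XTᵀM(λ)⁻¹`, and `s(λ) = ‖R̃(λ)J‖_F²`, the function `s` is differentiable on
`(0,∞)` with `s'(λ) ≤ 0` and `s''(λ) ≥ 0`; i.e. `s` is nonincreasing and convex there. -/
theorem stmt15 {D m r s : ℕ} (X : Matrix (Fin D) (Fin m) ℝ) (T : Matrix (Fin r) (Fin m) ℝ)
    (J : Matrix (Fin r) (Fin s) ℝ)
    (hpd : ∀ lam : ℝ, 0 < lam → (T * Tᵀ + lam • (J * Jᵀ)).PosDef) :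
    (∀ lam : ℝ, 0 < lam → DifferentiableAt ℝ
        (fun μ : ℝ => ∑ i, ∑ q, ((X * Tᵀ * (T * Tᵀ + μ • (J * Jᵀ))⁻¹ * J) i q) ^ 2) lam) ∧
    (∀ lam : ℝ, 0 < lam → deriv
        (fun μ : ℝ => ∑ i, ∑ q, ((X * Tᵀ * (T * Tᵀ + μ • (J * Jᵀ))⁻¹ * J) i q) ^ 2) lam ≤ 0) ∧
    (∀ lam : ℝ, 0 < lam → 0 ≤ deriv (deriv
        (fun μ : ℝ => ∑ i, ∑ q, ((X * Tᵀ * (T * Tᵀ + μ • (J * Jᵀ))⁻¹ * J) i q) ^ 2)) lam) ∧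
    AntitoneOn
        (fun μ : ℝ => ∑ i, ∑ q, ((X * Tᵀ * (T * Tᵀ + μ • (J * Jᵀ))⁻¹ * J) i q) ^ 2)
        (Set.Ioi 0) ∧
    ConvexOn ℝ (Set.Ioi 0)
        (fun μ : ℝ => ∑ i, ∑ q, ((X * Tᵀ * (T * Tᵀ + μ • (J * Jᵀ))⁻¹ * J) i q) ^ 2) := by
  have hs : ∀ t ∈ Set.Ioi (0 : ℝ), HasDerivAt (ridgeSq (T * Tᵀ) (X * Tᵀ) J)
      (ridgeSqDeriv (T * Tᵀ) (X * Tᵀ) J t) t := fun t ht => hasDerivAt_ridgeSq (hpd t ht).isUnit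
  have hs' : ∀ t ∈ Set.Ioi (0 : ℝ), HasDerivAt (ridgeSqDeriv (T * Tᵀ) (X * Tᵀ) J)
      (ridgeSqDeriv2 (T * Tᵀ) (X * Tᵀ) J t) t := fun t ht =>
    hasDerivAt_ridgeSqDeriv (hpd t ht).isUnit
  have hderiv2 : ∀ t ∈ Set.Ioi (0 : ℝ), deriv (deriv (ridgeSq (T * Tᵀ) (X * Tᵀ) J)) t =
      ridgeSqDeriv2 (T * Tᵀ) (X * Tᵀ) J t := by
    intro t ht
    have heq : deriv (ridgeSq (T * Tᵀ) (X * Tᵀ) J) =ᶠ[nhds t] ridgeSqDeriv (T * Tᵀ) (X * Tᵀ) J :=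
      Filter.eventually_of_mem (isOpen_Ioi.mem_nhds ht) fun u hu => (hs u hu).deriv
    rw [heq.deriv_eq, (hs' t ht).deriv]
  have hcont : ContinuousOn (ridgeSq (T * Tᵀ) (X * Tᵀ) J) (Set.Ioi 0) := fun t ht =>
    (hs t ht).continuousAt.continuousWithinAt
  refine ⟨fun t ht => (hs t ht).differentiableAt,
    fun t ht => (hs t ht).deriv.trans_le (ridgeSqDeriv_nonpos (hpd t ht)),
    fun t ht => (ridgeSqDeriv2_nonneg (hpd t ht)).trans_eq (hderiv2 t ht).symm, ?_, ?_⟩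
  · refine antitoneOn_of_hasDerivWithinAt_nonpos (f' := ridgeSqDeriv (T * Tᵀ) (X * Tᵀ) J)
      (convex_Ioi 0) hcont ?_ ?_ <;> rw [interior_Ioi]
    · exact fun t ht => (hs t ht).hasDerivWithinAt
    · exact fun t ht => ridgeSqDeriv_nonpos (hpd t ht)
  · refine convexOn_of_hasDerivWithinAt2_nonneg (f' := ridgeSqDeriv (T * Tᵀ) (X * Tᵀ) J)
      (f'' := ridgeSqDeriv2 (T * Tᵀ) (X * Tᵀ) J) (convex_Ioi 0) hcont ?_ ?_ ?_ <;>
        rw [interior_Ioi]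
    · exact fun t ht => (hs t ht).hasDerivWithinAt
    · exact fun t ht => (hs' t ht).hasDerivWithinAt
    · exact fun t ht => ridgeSqDeriv2_nonneg (hpd t ht)
end

section
/- Let M(λ) = M₀ + λ N where M₀ is symmetric positive semidefinite, N is symmetric positive semidefinite, and M(λ) is positive definite for all λ > 0. Then for any fixed vector w, the function λ ↦ ‖N^{1/2} M(λ)⁻¹ w‖² is nonincreasing on (0, ∞). -/
/-!
Write `A = M(a)` and `B = M(b) = A + (b - a) N` for `0 < a ≤ b`. The resolvent identity
`A⁻¹ - B⁻¹ = A⁻¹ (B - A) B⁻¹` gives `A⁻¹ w = y + d` with `y = B⁻¹ w` and `d = (b - a) A⁻¹ N y`, hence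
`‖N^{1/2} A⁻¹ w‖² = yᵀ N y + 2 (b - a) (N y)ᵀ A⁻¹ (N y) + dᵀ N d ≥ yᵀ N y = ‖N^{1/2} B⁻¹ w‖²`,
both correction terms being nonnegative because `A⁻¹` and `N` are positive semidefinite.
-/

open Matrix

namespace Matrix.PosSemidef

open scoped ComplexOrder

/-- The positive semidefinite square root of a positive semidefinite matrix (as defined in
Mathlib of December 2024; since removed from Mathlib). -/
noncomputable def sqrt {𝕜 : Type*} [RCLike 𝕜] {n : Type*} [Fintype n] [DecidableEq n]
    {A : Matrix n n 𝕜} (hA : A.PosSemidef) : Matrix n n 𝕜 :=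
  hA.1.eigenvectorUnitary.1 * diagonal ((↑) ∘ (√·) ∘ hA.1.eigenvalues) *
    (star hA.1.eigenvectorUnitary : Matrix n n 𝕜)

variable {𝕜 : Type*} [RCLike 𝕜] {n : Type*} [Fintype n] [DecidableEq n]

lemma posSemidef_sqrt {A : Matrix n n 𝕜} (hA : A.PosSemidef) : hA.sqrt.PosSemidef := by
  have hD : (diagonal ((↑) ∘ (√·) ∘ hA.1.eigenvalues : n → 𝕜)).PosSemidef :=
    posSemidef_diagonal_iff.mpr fun i => by
      rw [Function.comp_apply, RCLike.nonneg_iff]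
      simp [Real.sqrt_nonneg]
  simpa [sqrt, Matrix.star_eq_conjTranspose] using
    hD.mul_mul_conjTranspose_same (hA.1.eigenvectorUnitary : Matrix n n 𝕜)

lemma sqrt_mul_self {A : Matrix n n 𝕜} (hA : A.PosSemidef) : hA.sqrt * hA.sqrt = A := by
  let U : Matrix n n 𝕜 := hA.1.eigenvectorUnitary
  let D := diagonal ((↑) ∘ Real.sqrt ∘ hA.1.eigenvalues : n → 𝕜)
  have hU : star U * U = 1 := by simp [U]
  have hD : D * D = diagonal ((↑) ∘ hA.1.eigenvalues) := by
    rw [diagonal_mul_diagonal]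
    congr! with i
    simp [← pow_two, ← RCLike.ofReal_pow, Real.sq_sqrt (hA.eigenvalues_nonneg i)]
  calc hA.sqrt * hA.sqrt = U * (D * (star U * U) * D) * star U := by
        simp only [sqrt, mul_assoc]; rfl
    _ = A := by
        rw [hU, mul_one, hD]
        exact hA.1.spectral_theorem.symm

lemma sqrt_mulVec_dotProduct_sqrt_mulVec {A : Matrix n n ℝ} (hA : A.PosSemidef) (v : n → ℝ) :
    hA.sqrt *ᵥ v ⬝ᵥ hA.sqrt *ᵥ v = v ⬝ᵥ A *ᵥ v := by
  have hS : hA.sqrtᵀ = hA.sqrt := hA.posSemidef_sqrt.1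
  rw [← dotProduct_transpose_mulVec, hS, mulVec_mulVec, hA.sqrt_mul_self]

end Matrix.PosSemidef

namespace Matrix

variable {n : Type*} [Fintype n]

lemma add_dotProduct_mulVec_add {α : Type*} [CommRing α] {N : Matrix n n α} (hN : N.IsSymm)
    (y d : n → α) :
    (y + d) ⬝ᵥ N *ᵥ (y + d) = y ⬝ᵥ N *ᵥ y + 2 * (d ⬝ᵥ N *ᵥ y) + d ⬝ᵥ N *ᵥ d := by
  have hyd : y ⬝ᵥ N *ᵥ d = d ⬝ᵥ N *ᵥ y := by
    rw [← dotProduct_transpose_mulVec, hN.eq]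
  rw [mulVec_add, dotProduct_add, add_dotProduct, add_dotProduct, hyd]
  ring

variable [DecidableEq n]

lemma inv_mulVec_eq_inv_mulVec_add {α : Type*} [CommRing α] {A B : Matrix n n α}
    (h : IsUnit A ↔ IsUnit B) (w : n → α) :
    A⁻¹ *ᵥ w = B⁻¹ *ᵥ w + A⁻¹ *ᵥ (B - A) *ᵥ B⁻¹ *ᵥ w := by
  rw [mulVec_mulVec, mulVec_mulVec, ← inv_sub_inv h, ← add_mulVec, add_sub_cancel]

theorem PosDef.inv_mulVec_dotProduct_mulVec_add_smul_le {A N : Matrix n n ℝ} (hA : A.PosDef)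
    (hN : N.PosSemidef) {t : ℝ} (ht : 0 ≤ t) (w : n → ℝ) :
    (A + t • N)⁻¹ *ᵥ w ⬝ᵥ N *ᵥ (A + t • N)⁻¹ *ᵥ w ≤ A⁻¹ *ᵥ w ⬝ᵥ N *ᵥ A⁻¹ *ᵥ w := by
  set y := (A + t • N)⁻¹ *ᵥ w
  set d := t • A⁻¹ *ᵥ N *ᵥ y
  have hB : (A + t • N).PosDef := hA.add_posSemidef (hN.smul ht)
  have hx : A⁻¹ *ᵥ w = y + d := by
    rw [inv_mulVec_eq_inv_mulVec_add (iff_of_true hA.isUnit hB.isUnit), add_sub_cancel_left,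
      smul_mulVec, mulVec_smul]
  have hcross : 0 ≤ d ⬝ᵥ N *ᵥ y := by
    rw [smul_dotProduct, dotProduct_comm]
    exact mul_nonneg ht (by simpa using hA.inv.posSemidef.dotProduct_mulVec_nonneg (N *ᵥ y))
  have hd : 0 ≤ d ⬝ᵥ N *ᵥ d := by simpa using hN.dotProduct_mulVec_nonneg d
  rw [hx, add_dotProduct_mulVec_add (isHermitian_iff_isSymm.mp hN.1) y d]
  linarith

end Matrix

theorem stmt16_general {r : ℕ} (M₀ N : Matrix (Fin r) (Fin r) ℝ)
    (hN : N.PosSemidef)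
    (hpd : ∀ lam : ℝ, 0 < lam → (M₀ + lam • N).PosDef) (w : Fin r → ℝ) :
    AntitoneOn (fun lam : ℝ =>
      (hN.sqrt.mulVec ((M₀ + lam • N)⁻¹.mulVec w)) ⬝ᵥ
        (hN.sqrt.mulVec ((M₀ + lam • N)⁻¹.mulVec w))) (Set.Ioi 0) := by
  intro a ha b _ hab
  have hMb : M₀ + b • N = M₀ + a • N + (b - a) • N := by module
  simp only [hN.sqrt_mulVec_dotProduct_sqrt_mulVec, hMb]
  exact (hpd a ha).inv_mulVec_dotProduct_mulVec_add_smul_le hN (sub_nonneg.2 hab) w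

/-- Vector version of the monotonicity in Proposition 2: with `M(λ) = M₀ + λN`,
`M₀, N ⪰ 0`, `M(λ) ≻ 0` for `λ > 0`, the map `λ ↦ ‖N^{1/2} M(λ)⁻¹ w‖²` is nonincreasing
on `(0, ∞)`. -/
theorem stmt16 {r : ℕ} (M₀ N : Matrix (Fin r) (Fin r) ℝ)
    (hM₀ : M₀.PosSemidef) (hN : N.PosSemidef)
    (hpd : ∀ lam : ℝ, 0 < lam → (M₀ + lam • N).PosDef) (w : Fin r → ℝ) :
    AntitoneOn (fun lam : ℝ =>
      (hN.sqrt.mulVec ((M₀ + lam • N)⁻¹.mulVec w)) ⬝ᵥ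
        (hN.sqrt.mulVec ((M₀ + lam • N)⁻¹.mulVec w))) (Set.Ioi 0) :=
  stmt16_general M₀ N hN hpd w
end
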